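/- For every ε > 0 there exist integers U, V and k ≥ 1 such that the sequence X_0 = U, X_1 = V, X_{n+1} = X_n + X_{n−1} satisfies X_{k−1}, X_k ≥ 1 and X_n/F_n → A√5 with |A√5 − √τ| < ε, where A = (τV + U)/(τ + 2), τ = (√5+1)/2, and F_n is the n-th Fibonacci number. -/

import Mathlib

/-!
Every solution of the Fibonacci recurrence is `X n = L * F n + U * ψ ^ n` with `L = V + U / φ`
and `|ψ| < 1`, so `X n / F n → L`, and when `L > 0` also `X n → ∞`, which makes two consecutive
terms at least `1`. Since `1 / φ` is irrational, the numbers `V + U / φ` are dense in `ℝ`, so `L`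
can be taken within `ε` of `√φ`. Finally `φ + 2 = φ √5` identifies `A √5` with `L`.
-/

/-- The sequence X_0 = U, X_1 = V, X_{n+1} = X_n + X_{n−1}. -/
noncomputable def Xseq (U V : ℤ) : ℕ → ℝ
  | 0 => (U : ℝ)
  | 1 => (V : ℝ)
  | n + 2 => Xseq U V (n + 1) + Xseq U V n

open Filter Topology Real
open scoped goldenRatio

theorem Irrational.exists_int_add_int_mul_near {θ : ℝ} (hθ : Irrational θ) (x : ℝ) {ε : ℝ}
    (hε : 0 < ε) : ∃ U V : ℤ, |V + U * θ - x| < ε := by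
  have hdense : Dense (AddSubgroup.closure {θ, 1} : Set ℝ) :=
    dense_addSubgroupClosure_pair_iff.2 (by rwa [div_one])
  obtain ⟨y, hy, hxy⟩ := Metric.mem_closure_iff.1 (hdense x) ε hε
  obtain ⟨U, V, rfl⟩ := AddSubgroup.mem_closure_pair.1 hy
  refine ⟨U, V, ?_⟩
  rw [← Real.dist_eq, dist_comm]
  simpa [zsmul_eq_mul, add_comm] using hxy

theorem tendsto_natCast_fib_atTop : Tendsto (fun n => (Nat.fib n : ℝ)) atTop atTop :=
  tendsto_natCast_atTop_atTop.comp <| tendsto_atTop_atTop_of_monotone Nat.fib_mono fun n =>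
    ⟨n + 5, (Nat.le_add_right n 5).trans (Nat.le_fib_self (Nat.le_add_left 5 n))⟩

theorem tendsto_goldenConj_pow_atTop_nhds_zero : Tendsto (fun n : ℕ => ψ ^ n) atTop (𝓝 0) :=
  tendsto_pow_atTop_nhds_zero_of_abs_lt_one
    (abs_lt.2 ⟨neg_one_lt_goldenConj, goldenConj_neg.trans one_pos⟩)

namespace Xseq

variable (U V : ℤ)

theorem succ_eq (n : ℕ) : Xseq U V (n + 1) = U * Nat.fib n + V * Nat.fib (n + 1) := by
  induction n using Nat.twoStepInduction with
  | zero => simp [Xseq]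
  | one => simp [Xseq, add_comm]
  | more n ih₁ ih₂ =>
    have h₂ : Nat.fib (n + 2) = Nat.fib n + Nat.fib (n + 1) := Nat.fib_add_two
    have h₃ : Nat.fib (n + 3) = Nat.fib (n + 1) + Nat.fib (n + 2) := Nat.fib_add_two
    rw [Xseq, ih₂, ih₁, h₃, h₂]
    push_cast
    ring

theorem eq_mul_fib_add (n : ℕ) :
    Xseq U V n = (V + U * φ⁻¹) * Nat.fib n + U * ψ ^ n := by
  rw [inv_goldenRatio]
  cases n with
  | zero => simp [Xseq]
  | succ n =>
    rw [succ_eq, ← goldenConj_mul_fib_succ_add_fib]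
    ring

theorem tendsto_div_fib : Tendsto (fun n => Xseq U V n / Nat.fib n) atTop (𝓝 (V + U * φ⁻¹)) := by
  have herror : Tendsto (fun n => U * ψ ^ n * (Nat.fib n : ℝ)⁻¹) atTop (𝓝 0) := by
    simpa using (tendsto_goldenConj_pow_atTop_nhds_zero.const_mul (U : ℝ)).mul
      (tendsto_inv_atTop_zero.comp tendsto_natCast_fib_atTop)
  rw [← add_zero ((V : ℝ) + U * φ⁻¹)]
  refine (tendsto_const_nhds.add herror).congr' ?_
  filter_upwards [tendsto_natCast_fib_atTop.eventually_ne_atTop 0] with n hfib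
  rw [eq_mul_fib_add]
  field_simp

theorem tendsto_atTop (hL : 0 < (V + U * φ⁻¹ : ℝ)) : Tendsto (Xseq U V) atTop atTop := by
  have hψ : Tendsto (fun n : ℕ => (U : ℝ) * ψ ^ n) atTop (𝓝 (U * 0)) :=
    tendsto_goldenConj_pow_atTop_nhds_zero.const_mul _
  rw [funext (eq_mul_fib_add U V)]
  exact (tendsto_natCast_fib_atTop.const_mul_atTop hL).atTop_add hψ

end Xseq

theorem div_goldenRatio_add_two_mul_sqrt_five (u v : ℝ) :
    (φ * v + u) / (φ + 2) * √5 = v + u * φ⁻¹ := by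
  have hφ : φ + 2 = φ * √5 := by
    rw [goldenRatio]
    linear_combination (-1 / 2 : ℝ) * Real.sq_sqrt (show (0 : ℝ) ≤ 5 by norm_num)
  rw [hφ]
  field_simp

theorem exists_Xseq (ε : ℝ) (hε : 0 < ε) :
    ∃ (U V : ℤ) (k : ℕ), 1 ≤ k ∧
      1 ≤ Xseq U V (k - 1) ∧ 1 ≤ Xseq U V k ∧
      (let τ : ℝ := (Real.sqrt 5 + 1) / 2
       let A : ℝ := (τ * V + U) / (τ + 2)
       |A * Real.sqrt 5 - Real.sqrt τ| < ε ∧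
       Filter.Tendsto (fun n => Xseq U V n / (Nat.fib n : ℝ)) Filter.atTop
         (nhds (A * Real.sqrt 5))) := by
  have hτ : (√5 + 1) / 2 = φ := by rw [goldenRatio, add_comm]
  have hsqrt : 0 < √φ := Real.sqrt_pos.2 goldenRatio_pos
  obtain ⟨U, V, hUV⟩ :=
    goldenRatio_irrational.inv.exists_int_add_int_mul_near √φ (lt_min hε hsqrt)
  have hL : 0 < (V + U * φ⁻¹ : ℝ) := by
    linarith [(abs_lt.1 (hUV.trans_le (min_le_right _ _))).1]
  obtain ⟨N, hN⟩ := eventually_atTop.1 ((Xseq.tendsto_atTop U V hL).eventually_ge_atTop 1)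
  refine ⟨U, V, N + 1, N.succ_pos, hN N le_rfl, hN (N + 1) N.le_succ, ?_⟩
  simp only [hτ, div_goldenRatio_add_two_mul_sqrt_five]
  exact ⟨hUV.trans_le (min_le_left _ _), Xseq.tendsto_div_fib U V⟩
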